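/- The set of TS-valid inferences equals the relative sum of the set of LP-valid inferences and the set of K3-valid inferences: 𝕋𝕊⁺ = 𝕃ℙ⁺ † 𝕂₃⁺. That is, an inference Γ ⇒ Δ is TS-valid if and only if for every formula φ, either Γ ⇒ {φ} is LP-valid or {φ} ⇒ Δ is K3-valid. -/

import Mathlib

/-- Propositional formulas over a countably infinite set of variables,
with constants ⊤, ⊥, λ and connectives ¬, ∨, ∧. -/
inductive Fm : Type
  | var : ℕ → Fm
  | top : Fm
  | bot : Fm
  | lam : Fm
  | neg : Fm → Fm
  | disj : Fm → Fm → Fm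
  | conj : Fm → Fm → Fm
  deriving DecidableEq

/-- A function `v : Var → ℚ` is an SK-valuation if it takes values in {0, 1/2, 1}. -/
def SK (v : ℕ → ℚ) : Prop := ∀ p : ℕ, v p = 0 ∨ v p = 1/2 ∨ v p = 1

/-- Extension of a valuation to all formulas by the Strong Kleene scheme. -/
def eval (v : ℕ → ℚ) : Fm → ℚ
  | .var p => v p
  | .top => 1
  | .bot => 0
  | .lam => 1/2
  | .neg φ => 1 - eval v φ
  | .disj φ ψ => max (eval v φ) (eval v ψ)
  | .conj φ ψ => min (eval v φ) (eval v ψ)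

/-- An inference is a pair of finite sets of formulas. -/
abbrev Inference := Finset Fm × Finset Fm

def K3Valid (Γ Δ : Finset Fm) : Prop :=
  ∀ v : ℕ → ℚ, SK v → (∀ γ ∈ Γ, eval v γ = 1) → ∃ δ ∈ Δ, eval v δ = 1

def LPValid (Γ Δ : Finset Fm) : Prop :=
  ∀ v : ℕ → ℚ, SK v → (∀ γ ∈ Γ, eval v γ ≠ 0) → ∃ δ ∈ Δ, eval v δ ≠ 0

def STValid (Γ Δ : Finset Fm) : Prop :=
  ∀ v : ℕ → ℚ, SK v → (∀ γ ∈ Γ, eval v γ = 1) → ∃ δ ∈ Δ, eval v δ ≠ 0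

def TSValid (Γ Δ : Finset Fm) : Prop :=
  ∀ v : ℕ → ℚ, SK v → (∀ γ ∈ Γ, eval v γ ≠ 0) → ∃ δ ∈ Δ, eval v δ = 1

def K3plus : Set Inference := {I | K3Valid I.1 I.2}
def LPplus : Set Inference := {I | LPValid I.1 I.2}
def STplus : Set Inference := {I | STValid I.1 I.2}
def TSplus : Set Inference := {I | TSValid I.1 I.2}

/-- Relative product: the middle term is a single formula. -/
def RelProd (R S : Set Inference) : Set Inference :=
  {I | ∃ φ : Fm, (I.1, ({φ} : Finset Fm)) ∈ R ∧ (({φ} : Finset Fm), I.2) ∈ S}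

/-- Relative sum: for every single formula, one of the two components holds. -/
def RelSum (R S : Set Inference) : Set Inference :=
  {I | ∀ φ : Fm, (I.1, ({φ} : Finset Fm)) ∈ R ∨ (({φ} : Finset Fm), I.2) ∈ S}

/-!
Both sides say that `Γ` is LP-unsatisfiable or that `Δ` is K3-valid from no premises.

If `Γ ⇒ Δ` is TS-valid and `v` makes no premise false, then for any valuation `w`, the meet
of `v` and `w` (undetermined wherever they disagree) still makes no premise false, because
Strong Kleene evaluation is monotone in the information order; so it makes some `δ ∈ Δ` true,
and then so does `w`. Conversely, instantiating the relative sum at a variable `q` fresh for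
`Γ` and `Δ`, setting `q` to `0` (resp. `1`) changes nothing else, so `Γ ⇒ q` being LP-valid
makes `Γ` LP-unsatisfiable, and `q ⇒ Δ` being K3-valid makes `∅ ⇒ Δ` K3-valid.
-/

def vars : Fm → Finset ℕ
  | .var p => {p}
  | .top => ∅
  | .bot => ∅
  | .lam => ∅
  | .neg φ => vars φ
  | .disj φ ψ => vars φ ∪ vars ψ
  | .conj φ ψ => vars φ ∪ vars ψ

lemma eval_congr {v w : ℕ → ℚ} : ∀ {φ : Fm}, (∀ p ∈ vars φ, v p = w p) → eval v φ = eval w φ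
  | .var p, h => h p (Finset.mem_singleton_self p)
  | .top, _ | .bot, _ | .lam, _ => rfl
  | .neg φ, h => congrArg (1 - ·) (eval_congr h)
  | .disj φ ψ, h | .conj φ ψ, h => by
      simp only [vars, Finset.mem_union] at h
      simp only [eval, eval_congr fun p hp => h p (.inl hp), eval_congr fun p hp => h p (.inr hp)]

lemma eval_update_of_notMem_vars (v : ℕ → ℚ) {q : ℕ} (a : ℚ) {φ : Fm} (hq : q ∉ vars φ) :
    eval (Function.update v q a) φ = eval v φ :=
  eval_congr fun _ hp => Function.update_of_ne (ne_of_mem_of_not_mem hp hq) _ _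

lemma exists_notMem_vars (s : Finset Fm) : ∃ q, ∀ φ ∈ s, q ∉ vars φ := by
  obtain ⟨q, hq⟩ := Infinite.exists_notMem_finset (s.biUnion vars)
  exact ⟨q, fun φ hφ hqφ => hq (Finset.mem_biUnion.2 ⟨φ, hφ, hqφ⟩)⟩

lemma SK.update {v : ℕ → ℚ} (hv : SK v) (q : ℕ) {a : ℚ} (ha : a = 0 ∨ a = 1/2 ∨ a = 1) :
    SK (Function.update v q a) := by
  intro p
  rcases eq_or_ne p q with rfl | hpq
  · simpa using ha
  · simpa [Function.update_of_ne hpq] using hv p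

lemma eval_eq_zero_or_eq_half_or_eq_one {v : ℕ → ℚ} (hv : SK v) (φ : Fm) :
    eval v φ = 0 ∨ eval v φ = 1/2 ∨ eval v φ = 1 := by
  induction φ with
  | var p => exact hv p
  | top | bot | lam => simp [eval]
  | neg φ ih => rcases ih with h | h | h <;> simp only [eval, h] <;> norm_num
  | disj φ ψ ih₁ ih₂ | conj φ ψ ih₁ ih₂ =>
      rcases ih₁ with h₁ | h₁ | h₁ <;> rcases ih₂ with h₂ | h₂ | h₂ <;>
        simp only [eval, h₁, h₂] <;> norm_num

def Approximates (u v : ℕ → ℚ) : Prop := ∀ p, u p = v p ∨ u p = 1/2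

lemma SK.of_approximates {u v : ℕ → ℚ} (hv : SK v) (h : Approximates u v) : SK u := fun p => by
  rcases h p with h | h
  · exact h ▸ hv p
  · exact .inr (.inl h)

lemma eval_eq_or_eq_half_of_approximates {u v : ℕ → ℚ} (hv : SK v) (h : Approximates u v)
    (φ : Fm) : eval u φ = eval v φ ∨ eval u φ = 1/2 := by
  induction φ with
  | var p => exact h p
  | top | bot | lam => exact .inl rfl
  | neg φ ih => rcases ih with h | h <;> simp only [eval, h] <;> norm_num
  | disj φ ψ ih₁ ih₂ | conj φ ψ ih₁ ih₂ =>
      rcases eval_eq_zero_or_eq_half_or_eq_one hv φ with e₁ | e₁ | e₁ <;>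
        rcases eval_eq_zero_or_eq_half_or_eq_one hv ψ with e₂ | e₂ | e₂ <;>
          rcases ih₁ with h₁ | h₁ <;> rcases ih₂ with h₂ | h₂ <;>
            simp only [eval, h₁, h₂, e₁, e₂] <;> norm_num

def meet (v w : ℕ → ℚ) : ℕ → ℚ := fun p => if v p = w p then v p else 1/2

lemma meet_approximates_left (v w : ℕ → ℚ) : Approximates (meet v w) v := fun p => by
  by_cases h : v p = w p <;> simp [meet, h]

lemma meet_approximates_right (v w : ℕ → ℚ) : Approximates (meet v w) w := fun p => by
  by_cases h : v p = w p <;> simp [meet, h]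

section Validity

variable {Γ Γ' Δ Δ' : Finset Fm}

lemma LPValid.mono (h : LPValid Γ Δ) (hΓ : Γ ⊆ Γ') (hΔ : Δ ⊆ Δ') : LPValid Γ' Δ' :=
  fun v hv hΓ' =>
    let ⟨δ, hδ, hδv⟩ := h v hv fun γ hγ => hΓ' γ (hΓ hγ)
    ⟨δ, hΔ hδ, hδv⟩

lemma K3Valid.mono (h : K3Valid Γ Δ) (hΓ : Γ ⊆ Γ') (hΔ : Δ ⊆ Δ') : K3Valid Γ' Δ' :=
  fun v hv hΓ' =>
    let ⟨δ, hδ, hδv⟩ := h v hv fun γ hγ => hΓ' γ (hΓ hγ)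
    ⟨δ, hΔ hδ, hδv⟩

lemma LPValid.empty_of_var {q : ℕ} (h : LPValid Γ {Fm.var q}) (hq : ∀ γ ∈ Γ, q ∉ vars γ) :
    LPValid Γ ∅ := by
  intro v hv hΓ
  have hv₀ : SK (Function.update v q 0) := hv.update q (.inl rfl)
  obtain ⟨δ, hδ, hδv⟩ := h _ hv₀ fun γ hγ => by
    rw [eval_update_of_notMem_vars v 0 (hq γ hγ)]
    exact hΓ γ hγ
  rw [Finset.mem_singleton.1 hδ] at hδv
  simp [eval] at hδv

lemma K3Valid.empty_of_var {q : ℕ} (h : K3Valid {Fm.var q} Δ) (hq : ∀ δ ∈ Δ, q ∉ vars δ) :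
    K3Valid ∅ Δ := by
  intro v hv _
  have hv₁ : SK (Function.update v q 1) := hv.update q (.inr (.inr rfl))
  obtain ⟨δ, hδ, hδv⟩ := h _ hv₁ fun γ hγ => by simp [Finset.mem_singleton.1 hγ, eval]
  exact ⟨δ, hδ, eval_update_of_notMem_vars v 1 (hq δ hδ) ▸ hδv⟩

lemma TSValid.k3Valid_empty (h : TSValid Γ Δ) {v : ℕ → ℚ} (hv : SK v)
    (hΓ : ∀ γ ∈ Γ, eval v γ ≠ 0) : K3Valid ∅ Δ := by
  intro w hw _
  have hu : SK (meet v w) := hv.of_approximates (meet_approximates_left v w)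
  obtain ⟨δ, hδ, hδu⟩ := h _ hu fun γ hγ => by
    rcases eval_eq_or_eq_half_of_approximates hv (meet_approximates_left v w) γ with hγu | hγu
    · exact hγu ▸ hΓ γ hγ
    · norm_num [hγu]
  refine ⟨δ, hδ, ?_⟩
  rcases eval_eq_or_eq_half_of_approximates hw (meet_approximates_right v w) δ with hδw | hδw
  · rwa [← hδw]
  · norm_num [hδw] at hδu

theorem tsValid_iff : TSValid Γ Δ ↔ LPValid Γ ∅ ∨ K3Valid ∅ Δ := by
  refine ⟨fun h => ?_, ?_⟩
  · by_cases hsat : ∃ v, SK v ∧ ∀ γ ∈ Γ, eval v γ ≠ 0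
    · obtain ⟨v, hv, hΓ⟩ := hsat
      exact .inr (h.k3Valid_empty hv hΓ)
    · exact .inl fun v hv hΓ => (hsat ⟨v, hv, hΓ⟩).elim
  · rintro (h | h) v hv hΓ
    · obtain ⟨δ, hδ, -⟩ := h v hv hΓ
      exact absurd hδ (Finset.notMem_empty δ)
    · exact h v hv (by simp)

theorem mem_relSum_LPplus_K3plus_iff :
    (Γ, Δ) ∈ RelSum LPplus K3plus ↔ LPValid Γ ∅ ∨ K3Valid ∅ Δ := by
  refine ⟨fun h => ?_, ?_⟩
  · obtain ⟨q, hq⟩ := exists_notMem_vars (Γ ∪ Δ)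
    rcases h (Fm.var q) with h | h
    · exact .inl (h.empty_of_var fun γ hγ => hq γ (Finset.mem_union_left _ hγ))
    · exact .inr (h.empty_of_var fun δ hδ => hq δ (Finset.mem_union_right _ hδ))
  · rintro (h | h) φ
    · exact .inl (h.mono subset_rfl (Finset.empty_subset _))
    · exact .inr (h.mono (Finset.empty_subset _) subset_rfl)

end Validity

theorem TS_eq_relSum_LP_K3 : TSplus = RelSum LPplus K3plus := by
  ext ⟨Γ, Δ⟩
  exact tsValid_iff.trans mem_relSum_LPplus_K3plus_iff.symm
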